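/- Acyclic RCNMS theorem, base and induction structure: Let (𝒫, 𝓡) satisfy RCNMS (CNMS minus the restriction that conditions only reference sensor automata) and suppose the dependency graph of (𝒫, 𝓡) is acyclic and self-loop free. Then 𝒫 || 𝓡 is controllable with respect to ||𝒫, nonblocking, and moreover every component plant composed with the applicable requirements remains strongly connected. -/

import Mathlib

open scoped Classical

/-- A finite-automaton-style structure: alphabet, partial transition
function, initial state, and marked states. -/
structure Aut (Q E : Type) where
  alph : Set E
  δ : Q → E → Option Q
  q0 : Q
  Qm : Set Q

namespace Aut

variable {Q Q1 Q2 E : Type}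

/-- Extension of the partial transition function to strings. -/
def run (A : Aut Q E) : Q → List E → Option Q
  | q, [] => some q
  | q, e :: s => (A.δ q e).bind fun q' => A.run q' s

/-- Generated language. -/
def Lang (A : Aut Q E) : Set (List E) := {s | (A.run A.q0 s).isSome}

/-- Marked language. -/
def LangM (A : Aut Q E) : Set (List E) := {s | ∃ q ∈ A.Qm, A.run A.q0 s = some q}

def Reachable (A : Aut Q E) (q : Q) : Prop := ∃ s, A.run A.q0 s = some q

def Coreachable (A : Aut Q E) (q : Q) : Prop :=
  ∃ s q', A.run q s = some q' ∧ q' ∈ A.Qm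

def Trim (A : Aut Q E) : Prop := ∀ q, A.Reachable q ∧ A.Coreachable q

def Nonblocking (A : Aut Q E) : Prop := ∀ q, A.Reachable q → A.Coreachable q

def StronglyConnected (A : Aut Q E) : Prop := ∀ q1 q2 : Q, ∃ s, A.run q1 s = some q2

/-- Synchronous composition of two automata. -/
noncomputable def sync (A : Aut Q1 E) (B : Aut Q2 E) : Aut (Q1 × Q2) E where
  alph := A.alph ∪ B.alph
  δ := fun p e =>
    if e ∈ A.alph ∧ e ∈ B.alph then
      match A.δ p.1 e, B.δ p.2 e with
      | some a, some b => some (a, b)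
      | _, _ => none
    else if e ∈ A.alph then (A.δ p.1 e).map (fun a => (a, p.2))
    else if e ∈ B.alph then (B.δ p.2 e).map (fun b => (p.1, b))
    else none
  q0 := (A.q0, B.q0)
  Qm := {p | p.1 ∈ A.Qm ∧ p.2 ∈ B.Qm}

end Aut

namespace Aut

/-- Synchronous composition of a product system (pairwise disjoint alphabets):
the shuffle automaton on the product state space. -/
noncomputable def shuffle {m : ℕ} {Q : Fin m → Type} {E : Type}
    (A : ∀ i, Aut (Q i) E) : Aut (∀ i, Q i) E where
  alph := ⋃ i, (A i).alph
  δ := fun q e =>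
    if h : ∃ i, e ∈ (A i).alph then
      ((A h.choose).δ (q h.choose) e).map fun q' => Function.update q h.choose q'
    else none
  q0 := fun i => (A i).q0
  Qm := {q | ∀ i, q i ∈ (A i).Qm}

end Aut

namespace Aut

/-- Synchronous composition of an automaton with a state-event invariant
expression `μ needs C`: transitions labeled `μ` are removed from states
where the condition `C` is false. -/
noncomputable def restrict {Q E : Type} (A : Aut Q E) (μ : E) (C : Q → Prop) :
    Aut Q E where
  alph := A.alph
  δ := fun q e => if e = μ ∧ ¬ C q then none else A.δ q e
  q0 := A.q0
  Qm := A.Qm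

end Aut

/-- A literal: a (possibly negated) state reference `P_i.q`. -/
structure Lit (m : ℕ) (Q : Fin m → Type) where
  i : Fin m
  q : Q i
  pos : Bool

/-- Evaluation of a literal at a global state. -/
def Lit.eval {m : ℕ} {Q : Fin m → Type} (l : Lit m Q) (r : ∀ i, Q i) : Prop :=
  if l.pos then r l.i = l.q else r l.i ≠ l.q

/-- A predicate in disjunctive normal form over state references. -/
abbrev DNF (m : ℕ) (Q : Fin m → Type) := List (List (Lit m Q))

/-- Evaluation of a DNF predicate at a global state. -/
def DNF.eval {m : ℕ} {Q : Fin m → Type} (C : DNF m Q) (r : ∀ i, Q i) : Prop :=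
  ∃ conj ∈ C, ∀ l ∈ conj, l.eval r

/-- `K` is controllable with respect to `G` (given uncontrollable events `Su`). -/
def Controllable {QK QG E : Type} (Su : Set E) (K : Aut QK E) (G : Aut QG E) : Prop :=
  ∀ (s : List E) (u : E), u ∈ Su → (K.run K.q0 s).isSome →
    (G.run G.q0 (s ++ [u])).isSome → (K.run K.q0 (s ++ [u])).isSome

/-- A control problem satisfying the RCNMS properties (CNMS minus the
restriction that conditions only reference sensor automata). -/
structure RCNMS (m : ℕ) (Q : Fin m → Type) (E : Type) where
  plant : ∀ i, Aut (Q i) E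
  /-- controllable events -/
  Sc : Set E
  /-- uncontrollable events -/
  Su : Set E
  /-- the requirements: state-event invariant expressions `μ needs C` -/
  reqs : List (E × DNF m Q)
  part : ∀ e : E, ¬(e ∈ Sc ∧ e ∈ Su)
  events : ∀ i, (plant i).alph ⊆ Sc ∪ Su
  /-- the plant is a product system -/
  disj : ∀ i j, i ≠ j → ∀ e, ¬(e ∈ (plant i).alph ∧ e ∈ (plant j).alph)
  dom : ∀ i q e, (plant i).δ q e ≠ none → e ∈ (plant i).alph
  sc : ∀ i, (plant i).StronglyConnected
  hasMarked : ∀ i, ∃ q, q ∈ (plant i).Qm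
  evIn : ∀ r ∈ reqs, ∃ i, r.1 ∈ (plant i).alph
  ctrl : ∀ r ∈ reqs, r.1 ∈ Sc
  uniq : ∀ r1 ∈ reqs, ∀ r2 ∈ reqs, r1.1 = r2.1 → r1 = r2
  once : ∀ r ∈ reqs, ∀ conj ∈ r.2, ∀ l1 ∈ conj, ∀ l2 ∈ conj, l1.i = l2.i → l1 = l2
  nneg : ∀ r ∈ reqs, ∀ conj ∈ r.2, ∀ l ∈ conj, l.pos = false → ∃ a b : Q l.i, a ≠ b
  condNe : ∀ r ∈ reqs, r.2 ≠ []

namespace RCNMS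

variable {m : ℕ} {Q : Fin m → Type} {E : Type}

noncomputable def plantComp (cp : RCNMS m Q E) : Aut (∀ i, Q i) E :=
  Aut.shuffle cp.plant

noncomputable def sup (cp : RCNMS m Q E) : Aut (∀ i, Q i) E :=
  cp.reqs.foldl (fun A r => A.restrict r.1 (fun g => r.2.eval g)) cp.plantComp

/-- The dependency graph edge relation: there is an edge from plant `i` to
plant `j` if some requirement restricts an event of `i` and references a
state of `j` in its condition. -/
def DepEdge (cp : RCNMS m Q E) (i j : Fin m) : Prop :=
  ∃ r ∈ cp.reqs, r.1 ∈ (cp.plant i).alph ∧ ∃ conj ∈ r.2, ∃ l ∈ conj, l.i = j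

end RCNMS


/-! Choose an injective rank on the plants that strictly decreases along dependency edges; it
exists because the dependency graph is acyclic. By induction on `n`, the controlled system can
bring the plants of rank `< n` to arbitrary local states while the plants of rank `≥ n` stay put.
To move the plant of rank `n` along a path of its own strongly connected automaton, before each
restricted event one first brings the lower-ranked plants referenced by a conjunct of its
condition into a state satisfying that conjunct (possible because a conjunct mentions each plant
once and negates only plants with two states), and afterwards resets the lower plants.
Hence `𝒫 ‖ 𝓡` is strongly connected, which yields nonblocking and the reachability claim;
controllability holds because requirements only restrict controllable events. -/

open Function Relation

namespace Aut

variable {Q E : Type}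

theorem run_append (A : Aut Q E) (q : Q) (s t : List E) :
    A.run q (s ++ t) = (A.run q s).bind fun q' => A.run q' t := by
  induction s generalizing q with
  | nil => rfl
  | cons e s ih =>
    simp only [List.cons_append, run]
    cases A.δ q e with
    | none => rfl
    | some q' => exact ih q'

def Reaches (A : Aut Q E) (q q' : Q) : Prop := ∃ s, A.run q s = some q'

namespace Reaches

variable {A : Aut Q E} {q q₁ q₂ : Q}

theorem refl (A : Aut Q E) (q : Q) : A.Reaches q q := ⟨[], rfl⟩

theorem trans (h₁ : A.Reaches q q₁) (h₂ : A.Reaches q₁ q₂) : A.Reaches q q₂ := by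
  obtain ⟨s, hs⟩ := h₁
  obtain ⟨t, ht⟩ := h₂
  exact ⟨s ++ t, by rw [run_append, hs]; exact ht⟩

theorem head {e : E} (h₁ : A.δ q e = some q₁) (h₂ : A.Reaches q₁ q₂) : A.Reaches q q₂ := by
  obtain ⟨s, hs⟩ := h₂
  exact ⟨e :: s, by simp only [run, h₁, Option.bind_some, hs]⟩

end Reaches

theorem StronglyConnected.nonblocking {A : Aut Q E} (h : A.StronglyConnected)
    (hm : ∃ q, q ∈ A.Qm) : A.Nonblocking := fun q _ => by
  obtain ⟨qm, hqm⟩ := hm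
  obtain ⟨s, hs⟩ := h q qm
  exact ⟨s, qm, hs, hqm⟩

theorem run_eq_some_of_δ_eq_some {K G : Aut Q E}
    (hle : ∀ q e q', K.δ q e = some q' → G.δ q e = some q') {s : List E} :
    ∀ {q q' : Q}, K.run q s = some q' → G.run q s = some q' := by
  induction s with
  | nil => exact id
  | cons e s ih =>
    intro q q' h
    obtain ⟨q₁, hδ, hs⟩ := Option.bind_eq_some_iff.1 h
    simp only [run, hle _ _ _ hδ, Option.bind_some]
    exact ih hs

theorem foldl_restrict_δ {α : Type} (μ : α → E) (C : α → Q → Prop) (rs : List α)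
    (A : Aut Q E) (q : Q) (e : E) :
    (rs.foldl (fun A r => A.restrict (μ r) (C r)) A).δ q e =
      if ∃ r ∈ rs, μ r = e ∧ ¬ C r q then none else A.δ q e := by
  induction rs generalizing A with
  | nil => simp
  | cons r rs ih =>
    rw [List.foldl_cons, ih]
    by_cases h : μ r = e ∧ ¬ C r q
    · simp [restrict, h]
    · have h' : ¬(e = μ r ∧ ¬ C r q) := fun h' => h ⟨h'.1.symm, h'.2⟩
      simp [restrict, h, h']

theorem foldl_restrict_q0 {α : Type} (μ : α → E) (C : α → Q → Prop) (rs : List α)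
    (A : Aut Q E) : (rs.foldl (fun A r => A.restrict (μ r) (C r)) A).q0 = A.q0 := by
  induction rs generalizing A with
  | nil => rfl
  | cons r rs ih => exact ih _

theorem foldl_restrict_Qm {α : Type} (μ : α → E) (C : α → Q → Prop) (rs : List α)
    (A : Aut Q E) : (rs.foldl (fun A r => A.restrict (μ r) (C r)) A).Qm = A.Qm := by
  induction rs generalizing A with
  | nil => rfl
  | cons r rs ih => exact ih _

theorem shuffle_δ_of_mem {m : ℕ} {Q : Fin m → Type} (A : ∀ i, Aut (Q i) E)
    (hdisj : ∀ i j, i ≠ j → ∀ e, ¬(e ∈ (A i).alph ∧ e ∈ (A j).alph))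
    (g : ∀ i, Q i) {e : E} {i : Fin m} (he : e ∈ (A i).alph) :
    (shuffle A).δ g e = ((A i).δ (g i) e).map (update g i) := by
  have h : ∃ k, e ∈ (A k).alph := ⟨i, he⟩
  obtain rfl : h.choose = i := by
    by_contra hne
    exact hdisj _ _ hne e ⟨h.choose_spec, he⟩
  simp only [shuffle, dif_pos h]

end Aut

theorem controllable_of_δ_eq_some {QK E : Type} {Su : Set E} {K G : Aut QK E}
    (h0 : K.q0 = G.q0) (hle : ∀ q e q', K.δ q e = some q' → G.δ q e = some q')
    (hu : ∀ q u, u ∈ Su → K.δ q u = G.δ q u) : Controllable Su K G := by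
  intro s u hu' hK hG
  obtain ⟨q, hq⟩ := Option.isSome_iff_exists.1 hK
  have hGq : G.run G.q0 s = some q := h0 ▸ Aut.run_eq_some_of_δ_eq_some hle hq
  simp only [Aut.run_append, hq, hGq, Option.bind_some, Aut.run, hu q u hu'] at hG ⊢
  exact hG

theorem exists_injective_rank_of_acyclic {m : ℕ} {r : Fin m → Fin m → Prop}
    (h : ∀ i, ¬ TransGen r i i) : ∃ f : Fin m → ℕ, Injective f ∧ ∀ i j, r i j → f j < f i := by
  let height i := (Finset.univ.filter (TransGen r i)).card
  have height_lt : ∀ i j, r i j → height j < height i := fun i j hij =>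
    Finset.card_lt_card <| Finset.ssubset_iff_of_subset (fun k hk => by
      simp only [Finset.mem_filter, Finset.mem_univ, true_and] at hk ⊢
      exact TransGen.head hij hk) |>.2 ⟨j, by simp [TransGen.single hij], by simp [h j]⟩
  -- the summand `i` breaks ties, since it is the remainder modulo `m`
  refine ⟨fun i => i + m * height i, fun i j hij => Fin.ext ?_, fun i j hij => ?_⟩
  · simpa [Nat.add_mul_mod_self_left, Nat.mod_eq_of_lt] using congrArg (· % m) hij
  · have hle := Nat.mul_le_mul_left m (height_lt i j hij)
    rw [Nat.mul_succ] at hle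
    have := j.isLt
    dsimp only
    omega

variable {m : ℕ} {Q : Fin m → Type}

theorem Lit.eval_congr (l : Lit m Q) {r r' : ∀ i, Q i} (h : r l.i = r' l.i) :
    l.eval r ↔ l.eval r' := by
  simp only [Lit.eval, h]

theorem Lit.exists_eval_update (l : Lit m Q) (hneg : l.pos = false → ∃ a b : Q l.i, a ≠ b)
    (r : ∀ i, Q i) : ∃ v, l.eval (update r l.i v) := by
  cases hp : l.pos
  · obtain ⟨a, b, hab⟩ := hneg hp
    have := nontrivial_of_ne a b hab
    obtain ⟨v, hv⟩ := exists_ne l.q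
    exact ⟨v, by simp [Lit.eval, hp, hv]⟩
  · exact ⟨l.q, by simp [Lit.eval, hp]⟩

theorem exists_forall_lit_eval (conj : List (Lit m Q))
    (honce : ∀ l₁ ∈ conj, ∀ l₂ ∈ conj, l₁.i = l₂.i → l₁ = l₂)
    (hneg : ∀ l ∈ conj, l.pos = false → ∃ a b : Q l.i, a ≠ b) (g : ∀ i, Q i) :
    ∃ t : ∀ i, Q i, ∀ l ∈ conj, l.eval t := by
  induction conj with
  | nil => exact ⟨g, by simp⟩
  | cons l rest ih =>
    obtain ⟨t, ht⟩ := ih (fun l₁ h₁ l₂ h₂ => honce l₁ (.tail _ h₁) l₂ (.tail _ h₂))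
      (fun l' hl' => hneg l' (.tail _ hl'))
    obtain ⟨v, hv⟩ := l.exists_eval_update (hneg l (.head _)) t
    refine ⟨update t l.i v, fun l' hl' => ?_⟩
    by_cases hi : l'.i = l.i
    · rwa [honce l' hl' l (.head _) hi]
    · exact (l'.eval_congr (update_of_ne hi v t)).2 (ht l' (List.mem_of_ne_of_mem
        (fun h => hi (h ▸ rfl)) hl'))

namespace RCNMS

variable {E : Type} (cp : RCNMS m Q E)

theorem sup_δ (g : ∀ i, Q i) (e : E) :
    cp.sup.δ g e = if ∃ r ∈ cp.reqs, r.1 = e ∧ ¬ r.2.eval g then none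
      else cp.plantComp.δ g e :=
  Aut.foldl_restrict_δ Prod.fst (fun (r : E × DNF m Q) g => r.2.eval g) cp.reqs cp.plantComp g e

theorem sup_q0 : cp.sup.q0 = cp.plantComp.q0 :=
  Aut.foldl_restrict_q0 Prod.fst (fun (r : E × DNF m Q) g => r.2.eval g) cp.reqs cp.plantComp

theorem sup_Qm : cp.sup.Qm = cp.plantComp.Qm :=
  Aut.foldl_restrict_Qm Prod.fst (fun (r : E × DNF m Q) g => r.2.eval g) cp.reqs cp.plantComp

theorem plantComp_δ_of_mem (g : ∀ i, Q i) {e : E} {i : Fin m} (he : e ∈ (cp.plant i).alph) :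
    cp.plantComp.δ g e = ((cp.plant i).δ (g i) e).map (update g i) :=
  Aut.shuffle_δ_of_mem cp.plant cp.disj g he

theorem controllable_sup : Controllable cp.Su cp.sup cp.plantComp := by
  refine controllable_of_δ_eq_some cp.sup_q0 (fun q e q' h => ?_) (fun q u hu => ?_)
  · rw [sup_δ] at h
    split_ifs at h
    exact h
  · rw [sup_δ, if_neg]
    rintro ⟨r, hr, rfl, -⟩
    exact cp.part _ ⟨cp.ctrl r hr, hu⟩

def ResettableBelow (f : Fin m → ℕ) (n : ℕ) : Prop :=
  ∀ g t : ∀ i, Q i, ∃ g', cp.sup.Reaches g g' ∧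
    (∀ j, f j < n → g' j = t j) ∧ ∀ j, n ≤ f j → g' j = g j

section Rank

variable {cp} {f : Fin m → ℕ} (hf : ∀ i j, cp.DepEdge i j → f j < f i)
include hf

theorem exists_reaches_δ_eq_plantComp {i : Fin m} (hi : cp.ResettableBelow f (f i)) {e : E}
    (he : e ∈ (cp.plant i).alph) (g : ∀ j, Q j) :
    ∃ g₁, cp.sup.Reaches g g₁ ∧ (∀ j, f i ≤ f j → g₁ j = g j) ∧
      cp.sup.δ g₁ e = cp.plantComp.δ g₁ e := by
  by_cases hreq : ∃ r ∈ cp.reqs, r.1 = e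
  · obtain ⟨r, hr, rfl⟩ := hreq
    obtain ⟨conj, hconj⟩ := List.exists_mem_of_ne_nil r.2 (cp.condNe r hr)
    obtain ⟨t, ht⟩ := exists_forall_lit_eval conj (cp.once r hr conj hconj)
      (cp.nneg r hr conj hconj) g
    obtain ⟨g₁, hg₁, hlow, hhigh⟩ := hi g t
    refine ⟨g₁, hg₁, hhigh, ?_⟩
    rw [sup_δ, if_neg]
    rintro ⟨r', hr', hre, hne⟩
    obtain rfl := cp.uniq r' hr' r hr hre
    exact hne ⟨conj, hconj, fun l hl => (l.eval_congr
      (hlow _ (hf _ _ ⟨r', hr', he, conj, hconj, l, hl, rfl⟩))).2 (ht l hl)⟩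
  · refine ⟨g, .refl _ _, fun _ _ => rfl, ?_⟩
    rw [sup_δ, if_neg]
    rintro ⟨r, hr, hre, -⟩
    exact hreq ⟨r, hr, hre⟩

theorem exists_reaches_of_run {i : Fin m} (hi : cp.ResettableBelow f (f i)) {w : List E} :
    ∀ {g : ∀ j, Q j} {q : Q i}, (cp.plant i).run (g i) w = some q →
      ∃ g', cp.sup.Reaches g g' ∧ g' i = q ∧ ∀ j, f i < f j → g' j = g j := by
  induction w with
  | nil => exact fun h => ⟨_, .refl _ _, Option.some.inj h, fun _ _ => rfl⟩
  | cons e w ih =>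
    intro g q h
    obtain ⟨q₁, hδ, hw⟩ := Option.bind_eq_some_iff.1 h
    have he := cp.dom i (g i) e (by simp [hδ])
    obtain ⟨g₁, hg₁, hfix₁, hen⟩ := exists_reaches_δ_eq_plantComp hf hi he g
    have hstep : cp.sup.δ g₁ e = some (update g₁ i q₁) := by
      rw [hen, plantComp_δ_of_mem cp g₁ he, hfix₁ i le_rfl, hδ, Option.map_some]
    obtain ⟨g₂, hg₂, rfl, hfix₂⟩ := ih (g := update g₁ i q₁) (by rwa [update_self])
    refine ⟨g₂, hg₁.trans (.head hstep hg₂), rfl, fun j hj => ?_⟩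
    rw [hfix₂ j hj, update_of_ne (by rintro rfl; omega), hfix₁ j hj.le]

theorem ResettableBelow.succ (hinj : Injective f) {n : ℕ} (h : cp.ResettableBelow f n) :
    cp.ResettableBelow f (n + 1) := by
  intro g t
  by_cases hn : ∃ i, f i = n
  · obtain ⟨i, rfl⟩ := hn
    obtain ⟨w, hw⟩ := cp.sc i (g i) (t i)
    obtain ⟨g₁, hg₁, hg₁i, hfix₁⟩ := exists_reaches_of_run hf h hw
    obtain ⟨g₂, hg₂, hlow, hfix₂⟩ := h g₁ t
    refine ⟨g₂, hg₁.trans hg₂, fun j hj => ?_, fun j hj => ?_⟩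
    · rcases Nat.lt_succ_iff_lt_or_eq.1 hj with hj | hj
      · exact hlow j hj
      · rw [hinj hj, hfix₂ i le_rfl, hg₁i]
    · rw [hfix₂ j (by omega), hfix₁ j (by omega)]
  · simp only [not_exists] at hn
    obtain ⟨g', hg', hlow, hfix⟩ := h g t
    exact ⟨g', hg', fun j hj => hlow j (lt_of_le_of_ne (Nat.lt_succ_iff.1 hj) (hn j)),
      fun j hj => hfix j (by omega)⟩

theorem resettableBelow (hinj : Injective f) (n : ℕ) : cp.ResettableBelow f n := by
  induction n with
  | zero => exact fun g _ => ⟨g, .refl _ _, fun _ hj => absurd hj (Nat.not_lt_zero _),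
      fun _ _ => rfl⟩
  | succ n ih => exact ih.succ hf hinj

end Rank

theorem sup_stronglyConnected (hacyc : ∀ i, ¬ TransGen cp.DepEdge i i) :
    cp.sup.StronglyConnected := by
  obtain ⟨f, hinj, hf⟩ := exists_injective_rank_of_acyclic hacyc
  intro g t
  obtain ⟨g', hg', hlow, -⟩ := resettableBelow hf hinj (Finset.univ.sup f + 1) g t
  obtain rfl : g' = t :=
    funext fun j => hlow j (Nat.lt_succ_of_le (Finset.le_sup (Finset.mem_univ j)))
  exact hg'

end RCNMS

/-- Acyclic RCNMS: if a control problem satisfies RCNMS and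
its dependency graph is acyclic and self-loop free (no vertex reaches itself
by a nonempty chain of edges), then `𝒫 ‖ 𝓡` is controllable with respect to
`‖𝒫`, nonblocking, and each component plant composed with the applicable
requirements remains strongly connected (from any global state, any state of
any component can be reached in the controlled system). -/
theorem rcnms_acyclic_no_synthesis {m : ℕ} {Q : Fin m → Type} {E : Type}
    (cp : RCNMS m Q E)
    (hacyc : ∀ i, ¬ Relation.TransGen cp.DepEdge i i) :
    Controllable cp.Su cp.sup cp.plantComp ∧
    cp.sup.Nonblocking ∧
    (∀ (g : ∀ i, Q i) (i : Fin m) (t : Q i),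
      ∃ (s : List E) (g' : ∀ i, Q i), cp.sup.run g s = some g' ∧ g' i = t) := by
  have hsc := cp.sup_stronglyConnected hacyc
  have hmarked : ∃ g, g ∈ cp.sup.Qm :=
    ⟨fun i => (cp.hasMarked i).choose, cp.sup_Qm ▸ fun i => (cp.hasMarked i).choose_spec⟩
  refine ⟨cp.controllable_sup, hsc.nonblocking hmarked, fun g i t => ?_⟩
  obtain ⟨s, hs⟩ := hsc g (update g i t)
  exact ⟨s, _, hs, update_self i t g⟩
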